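/- Let N be a renewal process with i.i.d. interarrival times having distribution F satisfying ∫₀^∞ x F(dx) = 1/m < ∞ and admitting a density, and let its renewal function Φ(t) = Σ_{n≥0} F^{*n}([0,t]) admit Stone's decomposition Φ = Φ₁ + Φ₂ with Φ₂ finite and Φ₁ absolutely continuous with bounded density φ₁ satisfying φ₁(t) → m. Let h be nonnegative bounded measurable with α = ∫₀^∞ h < 1 and h(t) → 0, and ψ = Σ_{n≥1} h^{*n}. Define E(t) := Φ(t) + ∫₀^t ψ(t−s) Φ(s) ds. Then sup_{v∈[0,1]} |E(Tv)/T − v m/(1−α)| → 0 as T → ∞. -/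

import Mathlib

open MeasureTheory Filter intervalIntegral

/-- Convolution on `[0,∞)`: `(f*g)(t) = ∫₀ᵗ f(t-s) g(s) ds`. -/
noncomputable def conv (f g : ℝ → ℝ) (t : ℝ) : ℝ := ∫ s in (0:ℝ)..t, f (t - s) * g s

/-- `convPow h n = h^{*(n+1)}`. -/
noncomputable def convPow (h : ℝ → ℝ) : ℕ → ℝ → ℝ
  | 0 => h
  | n + 1 => conv (convPow h n) h

/-- Convolution of two measures on `ℝ`. -/
noncomputable def mconv (μ ν : Measure ℝ) : Measure ℝ :=
  (μ.prod ν).map (fun p => p.1 + p.2)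

/-- `mpow F n = F^{*n}`, with `F^{*0} = δ₀`. -/
noncomputable def mpow (F : Measure ℝ) : ℕ → Measure ℝ
  | 0 => Measure.dirac 0
  | n + 1 => mconv (mpow F n) F

/-- The renewal measure `Φ = Σ_{n≥0} F^{*n}`. -/
noncomputable def renewalMeasure (F : Measure ℝ) : Measure ℝ :=
  Measure.sum (fun n => mpow F n)

/-! Stone's decomposition gives `|Φ(t) - m t| ≤ ε t + K` for every `ε > 0`: the density part by
Cesàro averaging of `φ₁ → m`, the finite part being bounded. Convolution with an integrable kernel
`ψ` preserves this property, with slope `m ∫ ψ`; after dividing by `t` this is dominated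
convergence. Tonelli gives `∫ h^{*(n+1)} = α^(n+1)`, hence `∫ ψ = α / (1 - α)`, and
`E = Φ + ψ ⋆ Φ` has slope `m / (1 - α)`. Since `ε T v + K ≤ ε T + K` for `v ∈ [0, 1]`, the bound
is uniform in `v`. -/

open Set
open scoped ENNReal Interval

def HasAsymptoticSlope (g : ℝ → ℝ) (c : ℝ) : Prop :=
  ∀ ε > 0, ∃ K, ∀ t, 0 ≤ t → |g t - c * t| ≤ ε * t + K

lemma tendsto_zero_of_forall_abs_le_add_div {G : ℝ → ℝ}
    (hG : ∀ ε > 0, ∃ K, ∀ᶠ t in atTop, |G t| ≤ ε + K / t) : Tendsto G atTop (nhds 0) := by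
  refine Metric.tendsto_nhds.2 fun δ hδ => ?_
  obtain ⟨K, hK⟩ := hG (δ / 2) (half_pos hδ)
  have hKt : ∀ᶠ t in atTop, K / t < δ / 2 :=
    (tendsto_const_nhds.div_atTop tendsto_id).eventually (gt_mem_nhds (half_pos hδ))
  filter_upwards [hK, hKt] with t ht hKt
  rw [Real.dist_0_eq_abs]
  linarith

namespace HasAsymptoticSlope

variable {g g' : ℝ → ℝ} {c c' : ℝ}

lemma congr (hg : HasAsymptoticSlope g c) (hgg' : ∀ t, 0 ≤ t → g t = g' t) :
    HasAsymptoticSlope g' c := fun ε hε => by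
  obtain ⟨K, hK⟩ := hg ε hε
  exact ⟨K, fun t ht => hgg' t ht ▸ hK t ht⟩

lemma add (hg : HasAsymptoticSlope g c) (hg' : HasAsymptoticSlope g' c') :
    HasAsymptoticSlope (fun t => g t + g' t) (c + c') := fun ε hε => by
  obtain ⟨K, hK⟩ := hg (ε / 2) (half_pos hε)
  obtain ⟨K', hK'⟩ := hg' (ε / 2) (half_pos hε)
  refine ⟨K + K', fun t ht => ?_⟩
  calc |g t + g' t - (c + c') * t| = |(g t - c * t) + (g' t - c' * t)| := by ring_nf
    _ ≤ |g t - c * t| + |g' t - c' * t| := abs_add_le _ _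
    _ ≤ ε * t + (K + K') := by linarith [hK t ht, hK' t ht]

lemma of_abs_le {K : ℝ} (hK : ∀ t, 0 ≤ t → |g t| ≤ K) : HasAsymptoticSlope g 0 :=
  fun ε hε => ⟨K, fun t ht => by
    simpa using (hK t ht).trans (le_add_of_nonneg_left (by positivity))⟩

lemma abs_le (hg : HasAsymptoticSlope g c) :
    ∃ K, 0 ≤ K ∧ ∀ t, 0 ≤ t → |g t| ≤ (|c| + 1) * t + K := by
  obtain ⟨K, hK⟩ := hg 1 one_pos
  refine ⟨|K|, abs_nonneg K, fun t ht => ?_⟩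
  calc |g t| ≤ |g t - c * t| + |c * t| := by simpa using abs_add_le (g t - c * t) (c * t)
    _ ≤ (1 * t + K) + |c| * t := by rw [abs_mul, abs_of_nonneg ht]; linarith [hK t ht]
    _ ≤ (|c| + 1) * t + |K| := by linarith [le_abs_self K]

lemma tendsto_div (hg : HasAsymptoticSlope g c) : Tendsto (fun t => g t / t) atTop (nhds c) := by
  refine tendsto_sub_nhds_zero_iff.1 (tendsto_zero_of_forall_abs_le_add_div fun ε hε => ?_)
  obtain ⟨K, hK⟩ := hg ε hε
  refine ⟨K, (eventually_gt_atTop 0).mono fun t ht => ?_⟩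
  rw [show g t / t - c = (g t - c * t) / t by field_simp, abs_div, abs_of_pos ht,
    div_le_iff₀ ht, add_mul, div_mul_cancel₀ _ ht.ne']
  exact hK t ht.le

lemma tendsto_comp_sub_div (hg : HasAsymptoticSlope g c) (u : ℝ) :
    Tendsto (fun t => g (t - u) / t) atTop (nhds c) := by
  have hshift := hg.tendsto_div.comp (tendsto_atTop_add_const_right atTop (-u) tendsto_id)
  have hratio : Tendsto (fun t : ℝ => 1 - u * t⁻¹) atTop (nhds 1) := by
    simpa using tendsto_const_nhds.sub (tendsto_inv_atTop_zero.const_mul u)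
  refine (by simpa using hshift.mul hratio : Tendsto _ atTop (nhds c)).congr' ?_
  filter_upwards [eventually_gt_atTop (max u 0)] with t ht
  have ht0 : t ≠ 0 := (lt_of_le_of_lt (le_max_right u 0) ht).ne'
  have htu : t + -u ≠ 0 := by linarith [le_max_left u 0]
  field_simp
  ring_nf

lemma of_tendsto_div (hlim : Tendsto (fun t => g t / t) atTop (nhds c))
    (hbd : ∃ A B, ∀ t, 0 ≤ t → |g t| ≤ A * t + B) : HasAsymptoticSlope g c := by
  intro ε hε
  obtain ⟨A, B, hAB⟩ := hbd
  obtain ⟨T, hT⟩ := eventually_atTop.1 ((tendsto_sub_nhds_zero_iff.2 hlim).eventually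
    (Metric.ball_mem_nhds 0 hε))
  set T₀ := max T 1
  refine ⟨(|A| + |c|) * T₀ + |B|, fun t ht => ?_⟩
  rcases le_or_gt T₀ t with hTt | htT
  · have ht0 : 0 < t := lt_of_lt_of_le (lt_of_lt_of_le one_pos (le_max_right T 1)) hTt
    have hball := hT t (le_trans (le_max_left T 1) hTt)
    rw [Real.dist_0_eq_abs,
      show g t / t - c = (g t - c * t) / t by field_simp, abs_div, abs_of_pos ht0,
      div_lt_iff₀ ht0] at hball
    nlinarith [abs_nonneg A, abs_nonneg c, abs_nonneg B, (zero_le_one.trans (le_max_right T 1))]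
  · have h1 : |g t - c * t| ≤ |g t| + |c| * t := by
      simpa [abs_mul, abs_of_nonneg ht] using abs_sub (g t) (c * t)
    have h2 : A * t ≤ |A| * T₀ := (mul_le_mul_of_nonneg_right (le_abs_self A) ht).trans
      (mul_le_mul_of_nonneg_left htT.le (abs_nonneg A))
    have h3 : |c| * t ≤ |c| * T₀ := mul_le_mul_of_nonneg_left htT.le (abs_nonneg c)
    nlinarith [hAB t ht, le_abs_self B]

lemma tendsto_iSup_abs (hg : HasAsymptoticSlope g c) :
    Tendsto (fun T : ℝ => ⨆ v : Icc (0:ℝ) 1, |g (T * v) / T - v * c|) atTop (nhds 0) := by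
  refine tendsto_zero_of_forall_abs_le_add_div fun ε hε => ?_
  obtain ⟨K, hK⟩ := hg ε hε
  refine ⟨K, ?_⟩
  filter_upwards [eventually_gt_atTop 0] with T hT
  have : Nonempty (Icc (0:ℝ) 1) := ⟨⟨0, by norm_num⟩⟩
  rw [abs_of_nonneg (Real.iSup_nonneg fun v => abs_nonneg _)]
  refine ciSup_le fun ⟨v, hv0, hv1⟩ => ?_
  have hTv : 0 ≤ T * v := mul_nonneg hT.le hv0
  rw [show g (T * v) / T - v * c = (g (T * v) - c * (T * v)) / T by field_simp,
    abs_div, abs_of_pos hT, div_le_iff₀ hT, add_mul, div_mul_cancel₀ _ hT.ne']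
  have hεTv : ε * (T * v) ≤ ε * T := mul_le_mul_of_nonneg_left (by nlinarith) hε.le
  linarith [hK _ hTv]

end HasAsymptoticSlope

lemma hasAsymptoticSlope_intervalIntegral {φ : ℝ → ℝ} {C c : ℝ} (hφ : Measurable φ)
    (hφC : ∀ t, |φ t| ≤ C) (hlim : Tendsto φ atTop (nhds c)) :
    HasAsymptoticSlope (fun t => ∫ s in (0:ℝ)..t, φ s) c := by
  refine HasAsymptoticSlope.of_tendsto_div ?_ ⟨C, 0, fun t ht => ?_⟩
  · have hresc : ∀ t : ℝ, 0 < t → ∫ x in (0:ℝ)..1, φ (t * x) = (∫ s in (0:ℝ)..t, φ s) / t := by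
      intro t ht
      rw [intervalIntegral.integral_comp_mul_left _ ht.ne', mul_zero, mul_one, smul_eq_mul,
        inv_mul_eq_div]
    have hdom : Tendsto (fun t : ℝ => ∫ x in (0:ℝ)..1, φ (t * x)) atTop
        (nhds (∫ _ in (0:ℝ)..1, c)) :=
      intervalIntegral.tendsto_integral_filter_of_dominated_convergence (fun _ => C)
        (Eventually.of_forall fun t => (hφ.comp (measurable_const_mul t)).aestronglyMeasurable)
        (Eventually.of_forall fun t => ae_of_all _ fun x _ => hφC _) intervalIntegrable_const
        (ae_of_all _ fun x hx => hlim.comp (tendsto_id.atTop_mul_const (by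
          rw [uIoc_of_le zero_le_one] at hx; exact hx.1)))
    rw [intervalIntegral.integral_const, sub_zero, one_smul] at hdom
    exact hdom.congr' ((eventually_gt_atTop 0).mono hresc)
  · simpa [abs_of_nonneg ht] using
      intervalIntegral.norm_integral_le_of_norm_le_const (a := 0) (b := t) (f := φ)
        fun x _ => (Real.norm_eq_abs _).trans_le (hφC x)

lemma measure_Icc_eq_of_eq_withDensity_add {μ ν : Measure ℝ} {φ : ℝ → ℝ} {C : ℝ}
    (hμ : μ = (volume.restrict (Ici 0)).withDensity (fun t => ENNReal.ofReal (φ t)) + ν)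
    (hφ : Measurable φ) (hφ0 : ∀ t, 0 ≤ φ t) (hφC : ∀ t, φ t ≤ C) {t : ℝ} (ht : 0 ≤ t) :
    μ (Icc 0 t) = ENNReal.ofReal (∫ s in (0:ℝ)..t, φ s) + ν (Icc 0 t) := by
  have hint : IntegrableOn φ (Icc 0 t) :=
    Measure.integrableOn_of_bounded (M := C) measure_Icc_lt_top.ne hφ.aestronglyMeasurable
      (ae_of_all _ fun s => by rw [Real.norm_eq_abs, abs_of_nonneg (hφ0 s)]; exact hφC s)
  rw [hμ, Measure.add_apply, withDensity_apply _ measurableSet_Icc,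
    Measure.restrict_restrict measurableSet_Icc, inter_eq_left.2 fun s hs => hs.1,
    ← ofReal_integral_eq_lintegral_ofReal hint (ae_of_all _ hφ0), integral_Icc_eq_integral_Ioc,
    ← intervalIntegral.integral_of_le ht]

lemma hasAsymptoticSlope_measure_Icc {μ ν : Measure ℝ} [IsFiniteMeasure ν] {φ : ℝ → ℝ} {C c : ℝ}
    (hμ : μ = (volume.restrict (Ici 0)).withDensity (fun t => ENNReal.ofReal (φ t)) + ν)
    (hφ : Measurable φ) (hφ0 : ∀ t, 0 ≤ φ t) (hφC : ∀ t, φ t ≤ C)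
    (hlim : Tendsto φ atTop (nhds c)) :
    HasAsymptoticSlope (fun t => (μ (Icc 0 t)).toReal) c := by
  have hν : HasAsymptoticSlope (fun t => (ν (Icc 0 t)).toReal) 0 :=
    HasAsymptoticSlope.of_abs_le (K := ν.real univ) fun t _ => by
      rw [abs_of_nonneg ENNReal.toReal_nonneg]; exact measureReal_mono (subset_univ _)
  have hsum := (hasAsymptoticSlope_intervalIntegral hφ
    (fun t => by rw [abs_of_nonneg (hφ0 t)]; exact hφC t) hlim).add hν
  rw [add_zero] at hsum
  refine hsum.congr fun t ht => ?_
  rw [measure_Icc_eq_of_eq_withDensity_add hμ hφ hφ0 hφC ht,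
    ENNReal.toReal_add ENNReal.ofReal_ne_top (measure_ne_top _ _),
    ENNReal.toReal_ofReal (intervalIntegral.integral_nonneg ht fun s _ => hφ0 s)]

lemma Measurable.conv {f g : ℝ → ℝ} (hf : Measurable f) (hg : Measurable g) :
    Measurable (conv f g) := by
  have hset : MeasurableSet {p : ℝ × ℝ | p.2 ∈ Ι 0 p.1} :=
    (measurableSet_lt (measurable_const.min measurable_fst) measurable_snd).inter
      (measurableSet_le measurable_snd (measurable_const.max measurable_fst))
  have hF : Measurable fun p : ℝ × ℝ => f (p.1 - p.2) * g p.2 :=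
    (hf.comp (measurable_fst.sub measurable_snd)).mul (hg.comp measurable_snd)
  have hint : Measurable fun t => ∫ s in Ι 0 t, f (t - s) * g s := by
    simp_rw [← MeasureTheory.integral_indicator measurableSet_uIoc]
    exact ((hF.indicator hset).stronglyMeasurable.integral_prod_right').measurable
  have hsign : Measurable fun t : ℝ => if 0 ≤ t then (1 : ℝ) else -1 :=
    Measurable.ite measurableSet_Ici measurable_const measurable_const
  unfold _root_.conv
  simp_rw [intervalIntegral.intervalIntegral_eq_integral_uIoc, smul_eq_mul]
  exact hsign.mul hint

lemma conv_nonneg {f g : ℝ → ℝ} (hf : ∀ x, 0 ≤ x → 0 ≤ f x) (hg : ∀ x, 0 ≤ x → 0 ≤ g x)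
    {t : ℝ} (ht : 0 ≤ t) : 0 ≤ conv f g t :=
  intervalIntegral.integral_nonneg ht fun _ hs =>
    mul_nonneg (hf _ (sub_nonneg.2 hs.2)) (hg _ hs.1)

lemma conv_eq_integral_Ioc (f g : ℝ → ℝ) {t : ℝ} (ht : 0 ≤ t) :
    conv f g t = ∫ u in Ioc 0 t, f u * g (t - u) := by
  have hsub :=
    intervalIntegral.integral_comp_sub_left (fun u => f u * g (t - u)) t (a := 0) (b := t)
  simp only [sub_sub_cancel, sub_self, sub_zero] at hsub
  rw [conv, hsub, intervalIntegral.integral_of_le ht]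

lemma integrableOn_comp_sub_mul {f g : ℝ → ℝ} {M : ℝ} (hf : Measurable f)
    (hfM : ∀ x, 0 ≤ x → |f x| ≤ M) {t : ℝ} (hg : IntegrableOn g (Ioc 0 t)) :
    IntegrableOn (fun s => f (t - s) * g s) (Ioc 0 t) := by
  refine hg.bdd_mul (c := M) ((hf.comp (measurable_const.sub measurable_id)).aestronglyMeasurable)
    ((ae_restrict_iff' measurableSet_Ioc).2 (Eventually.of_forall fun s hs => ?_))
  exact hfM _ (sub_nonneg.2 hs.2)

lemma lintegral_lintegral_sub_mul {F G : ℝ → ℝ≥0∞} (hF : Measurable F) (hG : Measurable G) :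
    ∫⁻ t, ∫⁻ s, F (t - s) * G s = (∫⁻ t, F t) * ∫⁻ t, G t := by
  calc ∫⁻ t, ∫⁻ s, F (t - s) * G s
      = ∫⁻ p, F (p.1 - p.2) * G p.2 ∂(volume.prod volume) :=
        (lintegral_prod _ ((hF.comp (measurable_fst.sub measurable_snd)).mul
          (hG.comp measurable_snd)).aemeasurable).symm
    _ = ∫⁻ p, F p.1 * G p.2 ∂(volume.prod volume) :=
        (measurePreserving_sub_prod volume volume).lintegral_comp (f := fun p => F p.1 * G p.2)
          ((hF.comp measurable_fst).mul (hG.comp measurable_snd))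
    _ = (∫⁻ t, F t) * ∫⁻ t, G t := lintegral_prod_mul hF.aemeasurable hG.aemeasurable

lemma lintegral_ofReal_conv {f g : ℝ → ℝ} (hf : Measurable f) (hg : Measurable g)
    (hf0 : ∀ x, 0 ≤ x → 0 ≤ f x) (hg0 : ∀ x, 0 ≤ x → 0 ≤ g x)
    (hint : ∀ t, 0 < t → IntegrableOn (fun s => f (t - s) * g s) (Ioc 0 t)) :
    ∫⁻ t in Ioi 0, ENNReal.ofReal (conv f g t)
      = (∫⁻ t in Ioi 0, ENNReal.ofReal (f t)) * ∫⁻ t in Ioi 0, ENNReal.ofReal (g t) := by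
  -- `Ici` rather than `Ioi` here makes the slice `{s | F (t - s) * G s ≠ 0}` exactly `Ioc 0 t`.
  set F : ℝ → ℝ≥0∞ := (Ici 0).indicator fun x => ENNReal.ofReal (f x)
  set G : ℝ → ℝ≥0∞ := (Ioi 0).indicator fun x => ENNReal.ofReal (g x)
  have hslice : ∀ t, ∫⁻ s, F (t - s) * G s
      = (Ioi 0).indicator (fun t => ENNReal.ofReal (conv f g t)) t := by
    intro t
    have hpt : ∀ s, F (t - s) * G s
        = (Ioc 0 t).indicator (fun s => ENNReal.ofReal (f (t - s) * g s)) s := by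
      intro s
      by_cases hs : s ∈ Ioc 0 t
      · have hts : t - s ∈ Ici 0 := sub_nonneg.2 hs.2
        simp only [F, G, indicator_of_mem hs, indicator_of_mem hts,
          indicator_of_mem (mem_Ioi.2 hs.1), ENNReal.ofReal_mul (hf0 _ hts)]
      · rw [indicator_of_notMem hs]
        simp only [F, G, indicator_apply, mem_Ici, mem_Ioi, mem_Ioc, sub_nonneg] at hs ⊢
        split_ifs <;> simp_all
    rw [lintegral_congr hpt, lintegral_indicator measurableSet_Ioc]
    rcases le_or_gt t 0 with ht | ht
    · rw [Ioc_eq_empty (not_lt.2 ht), Measure.restrict_empty, lintegral_zero_measure,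
        indicator_of_notMem (notMem_Ioi.2 ht)]
    · rw [indicator_of_mem (mem_Ioi.2 ht), conv, intervalIntegral.integral_of_le ht.le,
        ofReal_integral_eq_lintegral_ofReal (hint t ht)]
      exact (ae_restrict_iff' measurableSet_Ioc).2 (Eventually.of_forall fun s hs =>
        mul_nonneg (hf0 _ (sub_nonneg.2 hs.2)) (hg0 _ hs.1.le))
  rw [← lintegral_indicator measurableSet_Ioi, ← funext hslice,
    lintegral_lintegral_sub_mul (hf.ennreal_ofReal.indicator measurableSet_Ici)
      (hg.ennreal_ofReal.indicator measurableSet_Ioi),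
    lintegral_indicator measurableSet_Ici, lintegral_indicator measurableSet_Ioi,
    setLIntegral_congr (Ioi_ae_eq_Ici (a := (0:ℝ))).symm]

lemma abs_conv_le {ψ g : ℝ → ℝ} {A B : ℝ} (hψ : IntegrableOn ψ (Ioi 0)) (hA : 0 ≤ A)
    (hg : ∀ s, 0 ≤ s → |g s| ≤ A * s + B) {t : ℝ} (ht : 0 ≤ t) :
    |conv ψ g t| ≤ (∫ u in Ioi 0, |ψ u|) * (A * t + B) := by
  have hbound : ∀ u ∈ Ioc 0 t, ‖ψ u * g (t - u)‖ ≤ |ψ u| * (A * t + B) := by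
    intro u hu
    rw [Real.norm_eq_abs, abs_mul]
    refine mul_le_mul_of_nonneg_left ((hg _ (sub_nonneg.2 hu.2)).trans ?_) (abs_nonneg _)
    nlinarith [hu.1]
  have hB : 0 ≤ B := by simpa using (abs_nonneg (g 0)).trans (hg 0 le_rfl)
  have hψIoc : IntegrableOn ψ (Ioc 0 t) := hψ.mono_set Ioc_subset_Ioi_self
  calc |conv ψ g t| = ‖∫ u in Ioc 0 t, ψ u * g (t - u)‖ := by
        rw [conv_eq_integral_Ioc ψ g ht, Real.norm_eq_abs]
    _ ≤ ∫ u in Ioc 0 t, |ψ u| * (A * t + B) :=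
        norm_integral_le_of_norm_le (hψIoc.abs.mul_const _)
          (ae_restrict_of_forall_mem measurableSet_Ioc hbound)
    _ = (∫ u in Ioc 0 t, |ψ u|) * (A * t + B) := MeasureTheory.integral_mul_const _ _
    _ ≤ (∫ u in Ioi 0, |ψ u|) * (A * t + B) :=
        mul_le_mul_of_nonneg_right (setIntegral_mono_set hψ.abs
          (ae_of_all _ fun u => abs_nonneg _) (ae_of_all _ Ioc_subset_Ioi_self)) (by positivity)

namespace HasAsymptoticSlope

variable {ψ g : ℝ → ℝ} {c : ℝ}

lemma tendsto_conv_div (hg : HasAsymptoticSlope g c) (hgm : Measurable g)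
    (hψ : IntegrableOn ψ (Ioi 0)) :
    Tendsto (fun t => _root_.conv ψ g t / t) atTop (nhds (c * ∫ u in Ioi 0, ψ u)) := by
  obtain ⟨K, hK0, hK⟩ := hg.abs_le
  set F : ℝ → ℝ → ℝ := fun t => (Iic t).indicator fun u => ψ u * (g (t - u) / t)
  have hF : ∀ t, 0 < t → ∫ u in Ioi 0, F t u = _root_.conv ψ g t / t := by
    intro t ht
    rw [MeasureTheory.integral_indicator measurableSet_Iic,
      Measure.restrict_restrict measurableSet_Iic, Iic_inter_Ioi, conv_eq_integral_Ioc ψ g ht.le,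
      ← MeasureTheory.integral_div]
    simp_rw [mul_div_assoc]
  have hdom :
      Tendsto (fun t => ∫ u in Ioi 0, F t u) atTop (nhds (∫ u in Ioi 0, ψ u * c)) := by
    refine tendsto_integral_filter_of_dominated_convergence (fun u => |ψ u| * (|c| + 1 + K))
      (Eventually.of_forall fun t => (hψ.aestronglyMeasurable.mul
        ((hgm.comp (measurable_const.sub measurable_id)).div_const t).aestronglyMeasurable)
          |>.indicator measurableSet_Iic) ?_ (hψ.abs.mul_const _) ?_
    · filter_upwards [eventually_ge_atTop 1] with t ht
      have ht0 : 0 < t := by linarith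
      refine ae_restrict_of_forall_mem measurableSet_Ioi fun u hu => ?_
      by_cases hut : u ∈ Iic t
      · have hg_le : |g (t - u)| ≤ (|c| + 1 + K) * t := by
          have := hK (t - u) (sub_nonneg.2 hut)
          nlinarith [mem_Ioi.1 hu, abs_nonneg c]
        simp only [F]
        rw [indicator_of_mem hut, Real.norm_eq_abs, abs_mul, abs_div, abs_of_pos ht0]
        exact mul_le_mul_of_nonneg_left ((div_le_iff₀ ht0).2 hg_le) (abs_nonneg _)
      · simp only [F]
        rw [indicator_of_notMem hut, norm_zero]
        positivity
    · refine ae_of_all _ fun u => ((hg.tendsto_comp_sub_div u).const_mul (ψ u)).congr' ?_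
      filter_upwards [eventually_ge_atTop u] with t ht
      exact (indicator_of_mem (mem_Iic.2 ht) fun u => ψ u * (g (t - u) / t)).symm
  rw [MeasureTheory.integral_mul_const, mul_comm] at hdom
  exact hdom.congr' ((eventually_gt_atTop 0).mono hF)

lemma conv (hg : HasAsymptoticSlope g c) (hgm : Measurable g) (hψ : IntegrableOn ψ (Ioi 0)) :
    HasAsymptoticSlope (_root_.conv ψ g) (c * ∫ u in Ioi 0, ψ u) := by
  obtain ⟨K, hK0, hK⟩ := hg.abs_le
  refine of_tendsto_div (hg.tendsto_conv_div hgm hψ)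
    ⟨(∫ u in Ioi 0, |ψ u|) * (|c| + 1), (∫ u in Ioi 0, |ψ u|) * K, fun t ht => ?_⟩
  exact (abs_conv_le hψ (by positivity) hK ht).trans_eq (by ring)

end HasAsymptoticSlope

lemma measurable_convPow {h : ℝ → ℝ} (hh : Measurable h) : ∀ n, Measurable (convPow h n)
  | 0 => hh
  | n + 1 => (measurable_convPow hh n).conv hh

lemma convPow_nonneg {h : ℝ → ℝ} (hh : ∀ x, 0 ≤ x → 0 ≤ h x) :
    ∀ n {t : ℝ}, 0 ≤ t → 0 ≤ convPow h n t
  | 0, _, ht => hh _ ht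
  | n + 1, _, ht => conv_nonneg (fun _ => convPow_nonneg hh n) hh ht

lemma abs_convPow_le {h : ℝ → ℝ} {C α : ℝ} (hh : Measurable h) (hh0 : ∀ x, 0 ≤ h x)
    (hhC : ∀ x, h x ≤ C) (hhint : IntegrableOn h (Ioi 0)) (hα : ∫ x in Ioi 0, h x = α) :
    ∀ n {t : ℝ}, 0 ≤ t → |convPow h n t| ≤ C * α ^ n
  | 0, t, _ => by simpa [convPow, abs_of_nonneg (hh0 t)] using hhC t
  | n + 1, t, ht => by
    have hα0 : 0 ≤ α := hα ▸ setIntegral_nonneg measurableSet_Ioi fun x _ => hh0 x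
    have hC0 : 0 ≤ C := (hh0 0).trans (hhC 0)
    have hIoc : IntegrableOn h (Ioc 0 t) := hhint.mono_set Ioc_subset_Ioi_self
    have hrec : ∀ x, 0 ≤ x → |convPow h n x| ≤ C * α ^ n := fun x hx =>
      abs_convPow_le hh hh0 hhC hhint hα n hx
    rw [abs_of_nonneg (convPow_nonneg (fun x _ => hh0 x) (n + 1) ht)]
    calc convPow h (n + 1) t = ∫ s in Ioc 0 t, convPow h n (t - s) * h s :=
          intervalIntegral.integral_of_le ht
      _ ≤ ∫ s in Ioc 0 t, C * α ^ n * h s :=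
          setIntegral_mono_on (integrableOn_comp_sub_mul (measurable_convPow hh n) hrec hIoc)
            (hIoc.const_mul _) measurableSet_Ioc fun s hs =>
              mul_le_mul_of_nonneg_right (le_of_abs_le (hrec _ (sub_nonneg.2 hs.2))) (hh0 s)
      _ = C * α ^ n * ∫ s in Ioc 0 t, h s := integral_const_mul _ _
      _ ≤ C * α ^ n * α := by
          refine mul_le_mul_of_nonneg_left ?_ (by positivity)
          exact hα ▸ setIntegral_mono_set hhint (Eventually.of_forall hh0)
            (Eventually.of_forall Ioc_subset_Ioi_self)
      _ = C * α ^ (n + 1) := by ring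

lemma lintegral_convPow {h : ℝ → ℝ} {C α : ℝ} (hh : Measurable h) (hh0 : ∀ x, 0 ≤ h x)
    (hhC : ∀ x, h x ≤ C) (hhint : IntegrableOn h (Ioi 0)) (hα : ∫ x in Ioi 0, h x = α) :
    ∀ n, ∫⁻ t in Ioi 0, ENNReal.ofReal (convPow h n t) = ENNReal.ofReal α ^ (n + 1)
  | 0 => by
    rw [zero_add, pow_one, ← hα, ofReal_integral_eq_lintegral_ofReal hhint
      (Eventually.of_forall hh0)]
    rfl
  | n + 1 => by
    have hint : ∀ t, 0 < t → IntegrableOn (fun s => convPow h n (t - s) * h s) (Ioc 0 t) :=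
      fun t _ => integrableOn_comp_sub_mul (measurable_convPow hh n)
        (fun _ => abs_convPow_le hh hh0 hhC hhint hα n) (hhint.mono_set Ioc_subset_Ioi_self)
    rw [convPow, lintegral_ofReal_conv (measurable_convPow hh n) hh
      (fun _ => convPow_nonneg (fun x _ => hh0 x) n) (fun x _ => hh0 x) hint,
      lintegral_convPow hh hh0 hhC hhint hα n, ← hα, ofReal_integral_eq_lintegral_ofReal hhint
      (Eventually.of_forall hh0), ← pow_succ]

lemma summable_convPow {h : ℝ → ℝ} {C α : ℝ} (hh : Measurable h) (hh0 : ∀ x, 0 ≤ h x)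
    (hhC : ∀ x, h x ≤ C) (hhint : IntegrableOn h (Ioi 0)) (hα : ∫ x in Ioi 0, h x = α)
    (hα1 : α < 1) {t : ℝ} (ht : 0 ≤ t) : Summable fun n => convPow h n t := by
  have hα0 : 0 ≤ α := hα ▸ setIntegral_nonneg measurableSet_Ioi fun x _ => hh0 x
  exact Summable.of_norm_bounded ((summable_geometric_of_lt_one hα0 hα1).mul_left C)
    fun n => abs_convPow_le hh hh0 hhC hhint hα n ht

lemma lintegral_tsum_convPow {h : ℝ → ℝ} {C α : ℝ} (hh : Measurable h) (hh0 : ∀ x, 0 ≤ h x)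
    (hhC : ∀ x, h x ≤ C) (hhint : IntegrableOn h (Ioi 0)) (hα : ∫ x in Ioi 0, h x = α)
    (hα1 : α < 1) :
    ∫⁻ t in Ioi 0, ENNReal.ofReal (∑' n, convPow h n t) = ENNReal.ofReal (α / (1 - α)) := by
  have hα0 : 0 ≤ α := hα ▸ setIntegral_nonneg measurableSet_Ioi fun x _ => hh0 x
  calc ∫⁻ t in Ioi 0, ENNReal.ofReal (∑' n, convPow h n t)
      = ∫⁻ t in Ioi 0, ∑' n, ENNReal.ofReal (convPow h n t) :=
        setLIntegral_congr_fun measurableSet_Ioi fun t ht => ENNReal.ofReal_tsum_of_nonneg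
          (fun n => convPow_nonneg (fun x _ => hh0 x) n (le_of_lt ht))
          (summable_convPow hh hh0 hhC hhint hα hα1 (le_of_lt ht))
    _ = ∑' n, ENNReal.ofReal α ^ (n + 1) := by
        rw [lintegral_tsum fun n => (measurable_convPow hh n).ennreal_ofReal.aemeasurable]
        exact tsum_congr (lintegral_convPow hh hh0 hhC hhint hα)
    _ = ENNReal.ofReal (α / (1 - α)) := by
        simp_rw [pow_succ', ENNReal.tsum_mul_left, ENNReal.tsum_geometric]
        rw [← ENNReal.ofReal_one, ← ENNReal.ofReal_sub _ hα0,
          ENNReal.ofReal_div_of_pos (by linarith), div_eq_mul_inv]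

lemma integrableOn_tsum_convPow {h : ℝ → ℝ} {C α : ℝ} (hh : Measurable h) (hh0 : ∀ x, 0 ≤ h x)
    (hhC : ∀ x, h x ≤ C) (hhint : IntegrableOn h (Ioi 0)) (hα : ∫ x in Ioi 0, h x = α)
    (hα1 : α < 1) : IntegrableOn (fun t => ∑' n, convPow h n t) (Ioi 0) := by
  refine ⟨(Measurable.tsum (measurable_convPow hh)).aestronglyMeasurable,
    (hasFiniteIntegral_iff_ofReal ?_).2 ?_⟩
  · exact ae_restrict_of_forall_mem measurableSet_Ioi fun t ht =>
      tsum_nonneg fun n => convPow_nonneg (fun x _ => hh0 x) n (le_of_lt ht)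
  · rw [lintegral_tsum_convPow hh hh0 hhC hhint hα hα1]
    exact ENNReal.ofReal_lt_top

lemma integral_tsum_convPow {h : ℝ → ℝ} {C α : ℝ} (hh : Measurable h) (hh0 : ∀ x, 0 ≤ h x)
    (hhC : ∀ x, h x ≤ C) (hhint : IntegrableOn h (Ioi 0)) (hα : ∫ x in Ioi 0, h x = α)
    (hα1 : α < 1) : ∫ t in Ioi 0, ∑' n, convPow h n t = α / (1 - α) := by
  have hα0 : 0 ≤ α := hα ▸ setIntegral_nonneg measurableSet_Ioi fun x _ => hh0 x
  rw [integral_eq_lintegral_of_nonneg_ae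
    (ae_restrict_of_forall_mem measurableSet_Ioi fun t ht =>
      tsum_nonneg fun n => convPow_nonneg (fun x _ => hh0 x) n (le_of_lt ht))
    (Measurable.tsum (measurable_convPow hh)).aestronglyMeasurable,
    lintegral_tsum_convPow hh hh0 hhC hhint hα hα1,
    ENNReal.toReal_ofReal (div_nonneg hα0 (by linarith))]

theorem uniform_lln_mean_RHP_general
    (F : Measure ℝ) (m : ℝ)
    (Φ₂ : Measure ℝ) [IsFiniteMeasure Φ₂] (φ₁ : ℝ → ℝ)
    (hφmeas : Measurable φ₁) (hφnn : ∀ t, 0 ≤ φ₁ t) (hφbdd : ∃ C, ∀ t, φ₁ t ≤ C)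
    (hφlim : Tendsto φ₁ atTop (nhds m))
    (hStone : renewalMeasure F
      = (volume.restrict (Set.Ici (0:ℝ))).withDensity (fun t => ENNReal.ofReal (φ₁ t))
        + Φ₂)
    (h : ℝ → ℝ) (C α : ℝ)
    (hhmeas : Measurable h) (hhnn : ∀ t, 0 ≤ h t)
    (hhint : IntegrableOn h (Set.Ioi 0))
    (hα : α = ∫ t in Set.Ioi (0:ℝ), h t) (hα1 : α < 1)
    (hhbdd : ∀ t, h t ≤ C) :
    Tendsto (fun T : ℝ => ⨆ v : Set.Icc (0:ℝ) 1,
        |((renewalMeasure F (Set.Icc 0 (T * v))).toReal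
          + ∫ s in (0:ℝ)..(T * v), (∑' n : ℕ, convPow h n (T * v - s))
              * (renewalMeasure F (Set.Icc 0 s)).toReal) / T
          - (v : ℝ) * m / (1 - α)|)
      atTop (nhds 0) := by
  obtain ⟨C₁, hφC⟩ := hφbdd
  set Φ : ℝ → ℝ := fun t => (renewalMeasure F (Icc 0 t)).toReal
  have hΦ : HasAsymptoticSlope Φ m := hasAsymptoticSlope_measure_Icc hStone hφmeas hφnn hφC hφlim
  have hΦmono : Monotone Φ := fun a b hab => by
    refine ENNReal.toReal_mono (ne_top_of_le_ne_top ?_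
      (measure_mono (Icc_subset_Icc_right (le_max_left b 0))))
      (measure_mono (Icc_subset_Icc_right hab))
    rw [measure_Icc_eq_of_eq_withDensity_add hStone hφmeas hφnn hφC (le_max_right b 0)]
    exact ENNReal.add_ne_top.2 ⟨ENNReal.ofReal_ne_top, measure_ne_top _ _⟩
  have hE := hΦ.add (hΦ.conv hΦmono.measurable
    (integrableOn_tsum_convPow hhmeas hhnn hhbdd hhint hα.symm hα1))
  have h1α : 1 - α ≠ 0 := (sub_pos.2 hα1).ne'
  rw [integral_tsum_convPow hhmeas hhnn hhbdd hhint hα.symm hα1,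
    show m + m * (α / (1 - α)) = m / (1 - α) by field_simp; ring] at hE
  simp only [mul_div_assoc]
  exact hE.tendsto_iSup_abs

/-- Uniform law of large numbers for the mean `E(t) = Φ(t) + ∫₀ᵗ ψ(t-s)Φ(s) ds` of a
renewal Hawkes process: under Stone's decomposition of the renewal measure `Φ` of an
interarrival distribution `F` with density and mean `1/m`, and for `h ≥ 0` bounded
measurable with `∫₀^∞ h = α < 1` and `h(t) → 0`, one has
`sup_{v∈[0,1]} |E(Tv)/T - v·m/(1-α)| → 0` as `T → ∞`. -/
theorem uniform_lln_mean_RHP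
    (F : Measure ℝ) [IsProbabilityMeasure F] (f : ℝ → ℝ) (m : ℝ) (hm : 0 < m)
    (hfmeas : Measurable f) (hfnn : ∀ x, 0 ≤ f x)
    (hfsupp : ∀ x < (0:ℝ), f x = 0)
    (hdens : F = volume.withDensity (fun x => ENNReal.ofReal (f x)))
    (hmean : ∫ x, x ∂F = 1 / m)
    (Φ₂ : Measure ℝ) [IsFiniteMeasure Φ₂] (φ₁ : ℝ → ℝ)
    (hφmeas : Measurable φ₁) (hφnn : ∀ t, 0 ≤ φ₁ t) (hφbdd : ∃ C, ∀ t, φ₁ t ≤ C)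
    (hφlim : Tendsto φ₁ atTop (nhds m))
    (hStone : renewalMeasure F
      = (volume.restrict (Set.Ici (0:ℝ))).withDensity (fun t => ENNReal.ofReal (φ₁ t))
        + Φ₂)
    (h : ℝ → ℝ) (C α : ℝ)
    (hhmeas : Measurable h) (hhnn : ∀ t, 0 ≤ h t)
    (hhint : IntegrableOn h (Set.Ioi 0))
    (hα : α = ∫ t in Set.Ioi (0:ℝ), h t) (hα1 : α < 1)
    (hhbdd : ∀ t, h t ≤ C) (hhlim : Tendsto h atTop (nhds 0)) :
    Tendsto (fun T : ℝ => ⨆ v : Set.Icc (0:ℝ) 1,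
        |((renewalMeasure F (Set.Icc 0 (T * v))).toReal
          + ∫ s in (0:ℝ)..(T * v), (∑' n : ℕ, convPow h n (T * v - s))
              * (renewalMeasure F (Set.Icc 0 s)).toReal) / T
          - (v : ℝ) * m / (1 - α)|)
      atTop (nhds 0) :=
  uniform_lln_mean_RHP_general F m Φ₂ φ₁ hφmeas hφnn hφbdd hφlim hStone h C α hhmeas hhnn hhint hα
    hα1 hhbdd
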